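/- arXiv:2410.17228 — 3 statements merged into one kernel-verified Lean document; each statement's English description precedes it below -/
import Mathlib

section
/- Let 0 ≤ q ≤ 1 and m ∈ ℕ* with m(1−q) ≤ 1. Let X_m have the truncated geometric distribution on [m] giving mass (1−q)q^{j−1}/(1−q^m) to each j ∈ [m]. Then for every j ∈ [m], |P(X_m = j) − 1/m| ≤ 3(1−q). -/
/-!
For `q < 1` the mass at `j` is `q ^ (j - 1) / S` with `S = ∑_{i < m} q ^ i`. Both `q ^ (j - 1)` and
the mean `S / m` lie in `[q ^ (m - 1), 1]`, so `|m q ^ (j - 1) - S| ≤ m (1 - q ^ (m - 1))`, which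
Bernoulli's inequality bounds by `m (m - 1) (1 - q)`. Summing Bernoulli's inequality over `i < m`
and using `m (1 - q) ≤ 1` gives `S ≥ m / 2`, so the error is at most `2 (1 - q)`.
-/

open Finset

theorem one_sub_pow_le_mul_one_sub {q : ℝ} (hq : -1 ≤ q) (n : ℕ) : 1 - q ^ n ≤ n * (1 - q) := by
  have := one_add_mul_le_pow (a := q - 1) (by linarith) n
  rw [add_sub_cancel] at this
  linarith

theorem half_card_le_geom_sum {q : ℝ} {m : ℕ} (hq : -1 ≤ q) (hq1 : q ≤ 1)
    (h : (m : ℝ) * (1 - q) ≤ 1) : (m : ℝ) / 2 ≤ ∑ i ∈ range m, q ^ i := by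
  have bernoulli : ∑ i ∈ range m, (1 - (i : ℝ) * (1 - q)) ≤ ∑ i ∈ range m, q ^ i :=
    sum_le_sum fun i _ => by linarith [one_sub_pow_le_mul_one_sub hq i]
  have gauss : (∑ i ∈ range m, (i : ℝ)) * 2 ≤ m * m := by
    have := congrArg (Nat.cast (R := ℝ)) (sum_range_id_mul_two m)
    push_cast at this
    rw [this]
    gcongr
    exact_mod_cast Nat.sub_le m 1
  rw [sum_sub_distrib, ← sum_mul] at bernoulli
  simp only [sum_const, card_range, nsmul_eq_mul, mul_one] at bernoulli
  nlinarith

theorem geom_sum_mem_Icc {q : ℝ} (hq0 : 0 ≤ q) (hq1 : q ≤ 1) (m : ℕ) :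
    ∑ i ∈ range m, q ^ i ∈ Set.Icc (m * q ^ (m - 1)) m := by
  constructor
  · simpa using card_nsmul_le_sum (range m) (q ^ ·) (q ^ (m - 1)) fun i hi =>
      pow_le_pow_of_le_one hq0 hq1 (Nat.le_sub_one_of_lt (mem_range.mp hi))
  · simpa using sum_le_card_nsmul (range m) (q ^ ·) 1 fun i _ => pow_le_one₀ hq0 hq1

theorem abs_card_mul_pow_sub_geom_sum_le {q : ℝ} (hq0 : 0 ≤ q) (hq1 : q ≤ 1) {m k : ℕ}
    (hk : k < m) : |m * q ^ k - ∑ i ∈ range m, q ^ i| ≤ m * (1 - q ^ (m - 1)) := by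
  obtain ⟨hS_lower, hS_upper⟩ := geom_sum_mem_Icc hq0 hq1 m
  have hk_lower : q ^ (m - 1) ≤ q ^ k := pow_le_pow_of_le_one hq0 hq1 (Nat.le_sub_one_of_lt hk)
  have hk_upper : q ^ k ≤ 1 := pow_le_one₀ hq0 hq1
  have hm : (0 : ℝ) ≤ m := m.cast_nonneg
  rw [abs_sub_le_iff]
  constructor <;>
    nlinarith [mul_le_mul_of_nonneg_left hk_lower hm, mul_le_mul_of_nonneg_left hk_upper hm]

theorem tgeom_mass_eq {K : Type*} [Field K] {q : K} (hq : q ≠ 1) (m k : ℕ) :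
    (1 - q) * q ^ k / (1 - q ^ m) = q ^ k / ∑ i ∈ range m, q ^ i := by
  have hfac : 1 - q ^ m = (1 - q) * ∑ i ∈ range m, q ^ i := by
    linear_combination geom_sum_mul q m
  rw [hfac, mul_div_mul_left _ _ (sub_ne_zero.mpr hq.symm)]

theorem tgeom_close_to_uniform_general (q : ℝ) (m : ℕ) (hq0 : 0 ≤ q) (hq1 : q ≤ 1)
    (hm : 1 ≤ m) (h : (m : ℝ) * (1 - q) ≤ 1) (j : ℕ) (hjm : j ≤ m) :
    |(if q = 1 then 1 / (m : ℝ) else (1 - q) * q ^ (j - 1) / (1 - q ^ m)) - 1 / m|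
      ≤ 3 * (1 - q) := by
  split_ifs with hq
  · simp [hq]
  rw [tgeom_mass_eq hq]
  set S := ∑ i ∈ range m, q ^ i
  have hm0 : (0 : ℝ) < m := by exact_mod_cast hm
  have hS : (m : ℝ) / 2 ≤ S := half_card_le_geom_sum (by linarith) hq1 h
  have hS0 : 0 < S := by linarith
  have hnum := abs_card_mul_pow_sub_geom_sum_le hq0 hq1 (m := m) (k := j - 1) (by omega)
  have hbern := one_sub_pow_le_mul_one_sub (by linarith : -1 ≤ q) (m - 1)
  rw [Nat.cast_pred hm] at hbern
  calc |q ^ (j - 1) / S - 1 / m| = |m * q ^ (j - 1) - S| / (m * S) := by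
        rw [div_sub_div _ _ hS0.ne' hm0.ne', abs_div, abs_of_pos (mul_pos hS0 hm0), mul_one,
          mul_comm (q ^ _), mul_comm S]
    _ ≤ m * ((m - 1) * (1 - q)) / (m * (m / 2)) := by
        have hbound : |m * q ^ (j - 1) - S| ≤ m * ((m - 1) * (1 - q)) :=
          hnum.trans (mul_le_mul_of_nonneg_left hbern hm0.le)
        gcongr
        exact (abs_nonneg _).trans hbound
    _ ≤ 3 * (1 - q) := by
        rw [div_le_iff₀ (by positivity)]
        nlinarith

/-- For `0 ≤ q ≤ 1`, `m ≥ 1` with `m(1-q) ≤ 1`, the truncated geometric mass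
`P(X_m = j) = (1-q)q^{j-1}/(1-q^m)` (uniform `1/m` when `q = 1`) satisfies
`|P(X_m = j) - 1/m| ≤ 3(1-q)` for all `j ∈ [m]`. -/
theorem tgeom_close_to_uniform (q : ℝ) (m : ℕ) (hq0 : 0 ≤ q) (hq1 : q ≤ 1)
    (hm : 1 ≤ m) (h : (m : ℝ) * (1 - q) ≤ 1) (j : ℕ) (hj1 : 1 ≤ j) (hjm : j ≤ m) :
    |(if q = 1 then 1 / (m : ℝ) else (1 - q) * q ^ (j - 1) / (1 - q ^ m)) - 1 / m|
      ≤ 3 * (1 - q) :=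
  tgeom_close_to_uniform_general q m hq0 hq1 hm h j hjm
end

section
/- Let σ, σ′ ∈ S_n be such that r_i(σ) ≤ r_i(σ′) for all i ∈ [n], where r_i denotes right-inversion counts. Then for every pattern ρ ∈ S_r, |occ(ρ, σ) − occ(ρ, σ′)| ≤ 2 (inv(σ′) − inv(σ)) · n^{r−1}. -/
/-- Right-inversion count: `r_i(σ) = #{j > i : σ(j) < σ(i)}`. -/
def rCount {n : ℕ} (σ : Equiv.Perm (Fin n)) (i : Fin n) : ℕ :=
  (Finset.univ.filter (fun j : Fin n => i < j ∧ σ j < σ i)).card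

/-- Number of inversions of `σ`. -/
def invCount {n : ℕ} (σ : Equiv.Perm (Fin n)) : ℕ :=
  (Finset.univ.filter (fun p : Fin n × Fin n => p.1 < p.2 ∧ σ p.2 < σ p.1)).card

/-- Number of occurrences of the pattern `ρ ∈ S_r` in `τ ∈ S_n`, counted via strictly
increasing maps `f : Fin r → Fin n` on which `τ` induces the pattern `ρ`. -/
def occ {r n : ℕ} (ρ : Equiv.Perm (Fin r)) (τ : Equiv.Perm (Fin n)) : ℕ :=
  ((Finset.univ : Finset (Fin r → Fin n)).filter
    (fun f => (∀ a b : Fin r, a < b → f a < f b) ∧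
      (∀ a b : Fin r, ρ a < ρ b ↔ τ (f a) < τ (f b)))).card

/-!
The right-inversion counts form the Lehmer code of a permutation: `σ i` is the `r_i(σ)`-th
smallest value not taken by `σ` at positions before `i`, so the code determines `σ`, and
`inv = ∑ r_i`. If `r(σ) ≤ r(σ')` pointwise and `σ ≠ σ'`, pick `i` with `r_i(σ) < r_i(σ')`
and swap `σ i` with the next larger value to its right; this raises `r_i` by one, leaves the
other counts unchanged, and stays below `r(σ')`. After `inv(σ') - inv(σ)` such swaps we reach
`σ'`. A swap of two positions only affects occurrences through those positions, and at most
`n ^ (r - 1)` increasing maps `Fin r → Fin n` pass through a given position.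
-/

open Finset Equiv

namespace Finset

theorem card_Iio_sdiff_lt_card_Iio_sdiff {α : Type*} [Preorder α] [LocallyFiniteOrderBot α]
    [DecidableEq α] {T : Finset α} {v w : α} (hv : v ∉ T) (hvw : v < w) :
    #(Iio v \ T) < #(Iio w \ T) := by
  have hsub : Iio v \ T ⊆ Iio w \ T := sdiff_subset_sdiff (Iio_subset_Iio hvw.le) subset_rfl
  refine card_lt_card ((ssubset_iff_of_subset hsub).2 ⟨v, ?_, ?_⟩) <;> simp [hv, hvw]

end Finset

section LehmerCode

variable {n : ℕ}

theorem invCount_eq_sum_rCount (σ : Perm (Fin n)) : invCount σ = ∑ i, rCount σ i := by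
  simp only [invCount, rCount, card_filter, Fintype.sum_prod_type]

theorem rCount_eq_card_Iio_sdiff_image (σ : Perm (Fin n)) (i : Fin n) :
    rCount σ i = #(Iio (σ i) \ (Iio i).image σ) := by
  refine card_equiv σ fun l => ?_
  simp only [mem_filter, mem_univ, true_and, mem_sdiff, mem_Iio, mem_image,
    σ.injective.eq_iff, exists_eq_right]
  constructor
  · rintro ⟨hil, hl⟩
    exact ⟨hl, hil.not_gt⟩
  · rintro ⟨hl, hli⟩
    refine ⟨lt_of_le_of_ne (not_lt.1 hli) ?_, hl⟩
    rintro rfl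
    exact hl.false

theorem rCount_injective : Function.Injective (rCount : Perm (Fin n) → Fin n → ℕ) := by
  intro σ τ h
  ext1 i
  induction i using WellFoundedLT.induction with
  | _ i ih =>
    have himage : (Iio i).image σ = (Iio i).image τ := image_congr fun j hj => ih j (mem_Iio.1 hj)
    have hσ : σ i ∉ (Iio i).image τ := by simp [← himage]
    have hτ : τ i ∉ (Iio i).image τ := by simp
    have hcode := congrFun h i
    rw [rCount_eq_card_Iio_sdiff_image, rCount_eq_card_Iio_sdiff_image, himage] at hcode
    rcases lt_trichotomy (σ i) (τ i) with hlt | heq | hgt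
    · exact absurd hcode (card_Iio_sdiff_lt_card_Iio_sdiff hσ hlt).ne
    · exact heq
    · exact absurd hcode (card_Iio_sdiff_lt_card_Iio_sdiff hτ hgt).ne'

end LehmerCode

section RightCounts

variable {n : ℕ} {σ σ' : Perm (Fin n)}

theorem invCount_le_invCount_of_rCount_le (h : ∀ i, rCount σ i ≤ rCount σ' i) :
    invCount σ ≤ invCount σ' := by
  simpa only [invCount_eq_sum_rCount] using sum_le_sum fun i _ => h i

theorem exists_rCount_lt_of_ne (h : ∀ i, rCount σ i ≤ rCount σ' i) (hne : σ ≠ σ') :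
    ∃ i, rCount σ i < rCount σ' i := by
  by_contra! hge
  exact hne (rCount_injective (funext fun i => (h i).antisymm (hge i)))

theorem invCount_lt_invCount_of_rCount_le (h : ∀ i, rCount σ i ≤ rCount σ' i) (hne : σ ≠ σ') :
    invCount σ < invCount σ' := by
  obtain ⟨i, hi⟩ := exists_rCount_lt_of_ne h hne
  simpa only [invCount_eq_sum_rCount] using sum_lt_sum (fun j _ => h j) ⟨i, mem_univ i, hi⟩

theorem exists_lt_apply_lt_of_rCount_lt {i : Fin n} (h : rCount σ i < rCount σ' i) :
    ∃ l, i < l ∧ σ i < σ l := by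
  by_contra! hle
  refine h.not_ge (card_le_card fun l hl => ?_)
  simp only [mem_filter, mem_univ, true_and] at hl ⊢
  exact ⟨hl.1, (hle l hl.1).lt_of_ne (σ.injective.ne hl.1.ne')⟩

theorem exists_next_value_right {i : Fin n} (h : ∃ l, i < l ∧ σ i < σ l) :
    ∃ k, i < k ∧ σ i < σ k ∧ ∀ l, i < l → σ i < σ l → σ k ≤ σ l := by
  obtain ⟨k, hk, hmin⟩ := (univ.filter fun l => i < l ∧ σ i < σ l).exists_min_image σ
    (by simpa [Finset.Nonempty] using h)
  simp only [mem_filter, mem_univ, true_and] at hk hmin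
  exact ⟨k, hk.1, hk.2, fun l hil hl => hmin l ⟨hil, hl⟩⟩

end RightCounts

section Transposition

variable {n : ℕ} {σ : Perm (Fin n)} {i k : Fin n}

theorem rCount_mul_swap_of_lt {j : Fin n} (hji : j < i) (hjk : j < k) :
    rCount (σ * swap i k) j = rCount σ j := by
  refine card_equiv (swap i k) fun l => ?_
  have hj : swap i k j = j := swap_apply_of_ne_of_ne hji.ne hjk.ne
  have hl : j < l ↔ j < swap i k l := by
    rcases eq_or_ne l i with rfl | hli
    · simp [hji, hjk]
    rcases eq_or_ne l k with rfl | hlk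
    · simp [hji, hjk]
    · rw [swap_apply_of_ne_of_ne hli hlk]
  simp [hj, hl]

theorem apply_lt_apply_next_iff (hlt : σ i < σ k) (hnext : ∀ l, i < l → σ i < σ l → σ k ≤ σ l)
    {l : Fin n} (hil : i < l) : σ l < σ k ↔ σ l < σ i := by
  refine ⟨fun hl => ?_, fun hl => hl.trans hlt⟩
  by_contra hli
  exact (hnext l hil ((not_lt.1 hli).lt_of_ne (σ.injective.ne hil.ne))).not_gt hl

theorem mul_swap_apply_lt_apply_iff (hlt : σ i < σ k)
    (hnext : ∀ l, i < l → σ i < σ l → σ k ≤ σ l) {p q : Fin n} (hp : i < p) (hq : i < q) :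
    (σ * swap i k) p < (σ * swap i k) q ↔ σ p < σ q := by
  have hswap : ∀ l, i < l → l ≠ k → swap i k l = l := fun l hl hlk =>
    swap_apply_of_ne_of_ne hl.ne' hlk
  simp only [Perm.mul_apply]
  by_cases hpk : p = k <;> by_cases hqk : q = k
  · simp [hpk, hqk]
  · rw [hpk, swap_apply_right, hswap q hq hqk]
    exact ⟨fun h => (hnext q hq h).lt_of_ne (σ.injective.ne (Ne.symm hqk)), hlt.trans⟩
  · rw [hqk, swap_apply_right, hswap p hp hpk]
    exact (apply_lt_apply_next_iff hlt hnext hp).symm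
  · rw [hswap p hp hpk, hswap q hq hqk]

theorem rCount_mul_swap_of_gt (hlt : σ i < σ k)
    (hnext : ∀ l, i < l → σ i < σ l → σ k ≤ σ l) {j : Fin n} (hij : i < j) :
    rCount (σ * swap i k) j = rCount σ j := by
  refine congrArg card (filter_congr fun l _ => and_congr_right fun hjl => ?_)
  exact mul_swap_apply_lt_apply_iff hlt hnext (hij.trans hjl) hij

theorem rCount_mul_swap_self (hik : i < k) (hlt : σ i < σ k)
    (hnext : ∀ l, i < l → σ i < σ l → σ k ≤ σ l) :
    rCount (σ * swap i k) i = rCount σ i + 1 := by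
  have hk : k ∉ univ.filter fun l => i < l ∧ σ l < σ i := by simp [hlt.le]
  rw [rCount, rCount, ← card_insert_of_notMem hk]
  congr 1
  ext l
  simp only [mem_filter, mem_univ, true_and, mem_insert, Perm.mul_apply, swap_apply_left]
  rcases eq_or_ne l k with rfl | hlk
  · simp [hik, hlt]
  · simp only [hlk, false_or]
    refine and_congr_right fun hil => ?_
    rw [swap_apply_of_ne_of_ne hil.ne' hlk]
    exact apply_lt_apply_next_iff hlt hnext hil

theorem rCount_mul_swap (hik : i < k) (hlt : σ i < σ k)
    (hnext : ∀ l, i < l → σ i < σ l → σ k ≤ σ l) (j : Fin n) :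
    rCount (σ * swap i k) j = rCount σ j + if j = i then 1 else 0 := by
  rcases lt_trichotomy j i with hji | rfl | hij
  · simp [rCount_mul_swap_of_lt hji (hji.trans hik), hji.ne]
  · simp [rCount_mul_swap_self hik hlt hnext]
  · simp [rCount_mul_swap_of_gt hlt hnext hij, hij.ne']

theorem invCount_mul_swap (hik : i < k) (hlt : σ i < σ k)
    (hnext : ∀ l, i < l → σ i < σ l → σ k ≤ σ l) :
    invCount (σ * swap i k) = invCount σ + 1 := by
  simp [invCount_eq_sum_rCount, rCount_mul_swap hik hlt hnext, sum_add_distrib]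

end Transposition

theorem exists_mul_swap_rCount_le {n : ℕ} {σ σ' : Perm (Fin n)}
    (h : ∀ j, rCount σ j ≤ rCount σ' j) (hne : σ ≠ σ') :
    ∃ i k, (∀ j, rCount (σ * swap i k) j ≤ rCount σ' j) ∧
      invCount (σ * swap i k) = invCount σ + 1 := by
  obtain ⟨i, hi⟩ := exists_rCount_lt_of_ne h hne
  obtain ⟨k, hik, hlt, hnext⟩ := exists_next_value_right (exists_lt_apply_lt_of_rCount_lt hi)
  refine ⟨i, k, fun j => ?_, invCount_mul_swap hik hlt hnext⟩
  rw [rCount_mul_swap hik hlt hnext]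
  split_ifs with hji
  · exact hji ▸ hi
  · exact h j

theorem Fin.range_eq_insert_range_removeNth {α : Type*} {m : ℕ} (f : Fin (m + 1) → α)
    (a : Fin (m + 1)) : Set.range f = insert (f a) (Set.range (Fin.removeNth a f)) := by
  change Set.range f = insert (f a) (Set.range (f ∘ a.succAbove))
  rw [Set.range_comp, Fin.range_succAbove, ← Set.image_insert_eq, Set.insert_eq,
    Set.union_compl_self, Set.image_univ]

section Patterns

variable {r n : ℕ}

def strictMonoThrough (r : ℕ) (i : Fin n) : Finset (Fin r → Fin n) :=
  univ.filter fun f => StrictMono f ∧ i ∈ Set.range f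

theorem card_strictMonoThrough_le (i : Fin n) : #(strictMonoThrough r i) ≤ n ^ (r - 1) := by
  cases r with
  | zero => simp [strictMonoThrough]
  | succ m =>
    calc #(strictMonoThrough (m + 1) i) ≤ #(univ : Finset (Fin m → Fin n)) := by
          refine card_le_card_of_injOn (fun f => Fin.removeNth (Function.invFun f i) f)
            (fun _ _ => mem_coe.2 (mem_univ _)) fun f hf g hg hfg => ?_
          simp only [strictMonoThrough, mem_coe, mem_filter, mem_univ, true_and] at hf hg
          dsimp only at hfg
          refine (hf.1.range_inj hg.1).1 ?_
          rw [Fin.range_eq_insert_range_removeNth f (Function.invFun f i),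
            Fin.range_eq_insert_range_removeNth g (Function.invFun g i),
            Function.invFun_eq hf.2, Function.invFun_eq hg.2, hfg]
      _ = n ^ (m + 1 - 1) := by simp

def occurrences (ρ : Perm (Fin r)) (τ : Perm (Fin n)) : Finset (Fin r → Fin n) :=
  univ.filter fun f => StrictMono f ∧ ∀ a b, ρ a < ρ b ↔ τ (f a) < τ (f b)

theorem occ_eq_card_occurrences (ρ : Perm (Fin r)) (τ : Perm (Fin n)) :
    occ ρ τ = #(occurrences ρ τ) :=
  rfl

variable (ρ : Perm (Fin r)) {σ τ : Perm (Fin n)} {s : Finset (Fin n)}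

theorem occurrences_subset_union_biUnion_strictMonoThrough (h : ∀ l ∉ s, σ l = τ l) :
    occurrences ρ σ ⊆ occurrences ρ τ ∪ s.biUnion (strictMonoThrough r) := by
  intro f hf
  simp only [occurrences, strictMonoThrough, mem_filter, mem_univ, true_and, mem_union,
    mem_biUnion] at hf ⊢
  by_cases hs : ∃ i ∈ s, i ∈ Set.range f
  · obtain ⟨i, hi, hfi⟩ := hs
    exact Or.inr ⟨i, hi, hf.1, hfi⟩
  · have hfs : ∀ a, σ (f a) = τ (f a) := fun a => h _ fun ha => hs ⟨_, ha, a, rfl⟩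
    exact Or.inl ⟨hf.1, fun a b => by rw [← hfs a, ← hfs b]; exact hf.2 a b⟩

theorem occ_le_occ_add_of_eqOn (h : ∀ l ∉ s, σ l = τ l) :
    occ ρ σ ≤ occ ρ τ + #s * n ^ (r - 1) := by
  rw [occ_eq_card_occurrences, occ_eq_card_occurrences]
  calc #(occurrences ρ σ) ≤ #(occurrences ρ τ ∪ s.biUnion (strictMonoThrough r)) :=
        card_le_card (occurrences_subset_union_biUnion_strictMonoThrough ρ h)
    _ ≤ #(occurrences ρ τ) + #(s.biUnion (strictMonoThrough r)) := card_union_le _ _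
    _ ≤ #(occurrences ρ τ) + #s * n ^ (r - 1) :=
        Nat.add_le_add_left
          (card_biUnion_le_card_mul _ _ _ fun i _ => card_strictMonoThrough_le i) _

theorem abs_occ_sub_occ_le_of_eqOn (h : ∀ l ∉ s, σ l = τ l) :
    |(occ ρ σ : ℤ) - occ ρ τ| ≤ #s * n ^ (r - 1) := by
  have hστ := occ_le_occ_add_of_eqOn ρ h
  have hτσ := occ_le_occ_add_of_eqOn ρ fun l hl => (h l hl).symm
  zify at hστ hτσ
  rw [abs_sub_le_iff]
  constructor <;> linarith

theorem abs_occ_sub_occ_mul_swap_le (σ : Perm (Fin n)) (i k : Fin n) :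
    |(occ ρ σ : ℤ) - occ ρ (σ * swap i k)| ≤ 2 * n ^ (r - 1) := by
  have hswap : ∀ l ∉ ({i, k} : Finset (Fin n)), σ l = (σ * swap i k) l := fun l hl => by
    simp only [mem_insert, mem_singleton, not_or] at hl
    rw [Perm.mul_apply, swap_apply_of_ne_of_ne hl.1 hl.2]
  calc |(occ ρ σ : ℤ) - occ ρ (σ * swap i k)| ≤ #{i, k} * n ^ (r - 1) :=
        abs_occ_sub_occ_le_of_eqOn ρ hswap
    _ ≤ 2 * n ^ (r - 1) := by gcongr; exact_mod_cast card_le_two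

end Patterns

/-- If `r_i(σ) ≤ r_i(σ')` for all `i`, then
`|occ(ρ,σ) - occ(ρ,σ')| ≤ 2 (inv(σ') - inv(σ)) n^{r-1}`. -/
theorem occ_diff_le_of_rightCounts_le (n r : ℕ) (σ σ' : Equiv.Perm (Fin n))
    (h : ∀ i, rCount σ i ≤ rCount σ' i) (ρ : Equiv.Perm (Fin r)) :
    |(occ ρ σ : ℤ) - occ ρ σ'| ≤
      2 * ((invCount σ' : ℤ) - invCount σ) * (n : ℤ) ^ (r - 1) := by
  obtain ⟨d, hd⟩ := Nat.exists_eq_add_of_le (invCount_le_invCount_of_rCount_le h)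
  rw [hd, Nat.cast_add, add_sub_cancel_left]
  induction d generalizing σ with
  | zero =>
    obtain rfl : σ = σ' := by
      by_contra hne
      exact (invCount_lt_invCount_of_rCount_le h hne).ne' hd
    simp
  | succ d ih =>
    have hne : σ ≠ σ' := by rintro rfl; omega
    obtain ⟨i, k, hle, hinv⟩ := exists_mul_swap_rCount_le h hne
    calc |(occ ρ σ : ℤ) - occ ρ σ'|
        ≤ |(occ ρ σ : ℤ) - occ ρ (σ * swap i k)| + |(occ ρ (σ * swap i k) : ℤ) - occ ρ σ'| :=
          abs_sub_le _ _ _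
      _ ≤ 2 * n ^ (r - 1) + 2 * d * n ^ (r - 1) :=
          add_le_add (abs_occ_sub_occ_mul_swap_le ρ σ i k) (ih _ hle (by omega))
      _ = 2 * ((d + 1 : ℕ) : ℤ) * n ^ (r - 1) := by push_cast; ring
end

section
/- For every integer d ≥ 1, the identity ∑_{1 ≤ i, j ≤ d} C(i+j−2, i−1) · C(2d−i−j, d−i) = (2d−1)! / ((d−1)!)^2 holds, where C(·,·) denotes binomial coefficients. -/
/-!
Substituting `a = i - 1`, `b = j - 1`, the inner sum becomes the upper Vandermonde convolution
`∑_{p + q = d - 1} C(a + p, p) C(c + q, q) = C(a + c + 1 + (d - 1), d - 1)` with `a + c = d - 1`,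
so it equals `C(2d - 1, d - 1)` for every `i`. The convolution is Chu–Vandermonde evaluated at
negative integers, where `C(-(a + 1), k) = (-1)^k C(a + k, k)`.
-/

open Finset Nat

theorem Ring.choose_neg_natCast_succ (a k : ℕ) :
    Ring.choose (-((a + 1 : ℕ) : ℤ)) k = (-1) ^ k * ((a + k).choose k : ℤ) := by
  rw [Ring.choose_neg, Units.smul_def, Int.coe_negOnePow_natCast, ← Ring.choose_natCast,
    smul_eq_mul]
  push_cast
  ring_nf

theorem Nat.sum_antidiagonal_add_choose_mul_add_choose (a c n : ℕ) :
    ∑ ij ∈ antidiagonal n, (a + ij.1).choose ij.1 * (c + ij.2).choose ij.2 =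
      (a + c + 1 + n).choose n := by
  have h := Ring.add_choose_eq n (Commute.all (-((a + 1 : ℕ) : ℤ)) (-((c + 1 : ℕ) : ℤ)))
  rw [← neg_add, ← Nat.cast_add, show a + 1 + (c + 1) = (a + c + 1) + 1 by omega,
    Ring.choose_neg_natCast_succ] at h
  have hterm : ∀ ij ∈ antidiagonal n, Ring.choose (-((a + 1 : ℕ) : ℤ)) ij.1 *
      Ring.choose (-((c + 1 : ℕ) : ℤ)) ij.2 =
      (-1) ^ n * (((a + ij.1).choose ij.1 * (c + ij.2).choose ij.2 : ℕ) : ℤ) := by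
    intro ij hij
    rw [← HasAntidiagonal.mem_antidiagonal.mp hij, Ring.choose_neg_natCast_succ,
      Ring.choose_neg_natCast_succ]
    push_cast
    ring
  rw [sum_congr rfl hterm, ← mul_sum, mul_right_inj' (by positivity)] at h
  exact_mod_cast h.symm

theorem Nat.sum_Icc_choose_mul_choose {d i : ℕ} (hi : 1 ≤ i) (hid : i ≤ d) :
    ∑ j ∈ Icc 1 d, (i + j - 2).choose (i - 1) * (2 * d - i - j).choose (d - i) =
      (2 * d - 1).choose (d - 1) := by
  have hsum : ∑ j ∈ Icc 1 d, (i + j - 2).choose (i - 1) * (2 * d - i - j).choose (d - i) =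
      ∑ p ∈ antidiagonal (d - 1), (i - 1 + p.1).choose p.1 * (d - i + p.2).choose p.2 := by
    refine sum_nbij' (fun j ↦ (j - 1, d - j)) (fun p ↦ p.1 + 1) ?_ ?_ ?_ ?_ ?_
    · intro j hj
      simp only [mem_Icc, HasAntidiagonal.mem_antidiagonal] at hj ⊢
      omega
    · intro p hp
      simp only [mem_Icc, HasAntidiagonal.mem_antidiagonal] at hp ⊢
      omega
    · intro j hj
      simp only [mem_Icc] at hj
      omega
    · intro p hp
      simp only [HasAntidiagonal.mem_antidiagonal] at hp
      ext <;> simp only <;> omega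
    · intro j hj
      simp only [mem_Icc] at hj
      rw [show i + j - 2 = i - 1 + (j - 1) by omega, show 2 * d - i - j = d - i + (d - j) by omega,
        Nat.choose_symm_add, Nat.choose_symm_add]
  rw [hsum, Nat.sum_antidiagonal_add_choose_mul_add_choose]
  congr 1
  omega

theorem Nat.succ_mul_choose_eq_factorial_div (n : ℕ) :
    (n + 1) * (2 * n + 1).choose n = (2 * n + 1)! / n ! ^ 2 := by
  refine (Nat.div_eq_of_eq_mul_left (by positivity) ?_).symm
  have h := Nat.choose_mul_factorial_mul_factorial (show n ≤ 2 * n + 1 by omega)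
  rw [show 2 * n + 1 - n = n + 1 by omega, Nat.factorial_succ] at h
  rw [← h]
  ring

/-- `∑_{1≤i,j≤d} C(i+j-2, i-1) C(2d-i-j, d-i) = (2d-1)!/((d-1)!)²` for `d ≥ 1`. -/
theorem binomial_double_sum_identity (d : ℕ) (hd : 1 ≤ d) :
    ∑ i ∈ Finset.Icc 1 d, ∑ j ∈ Finset.Icc 1 d,
        Nat.choose (i + j - 2) (i - 1) * Nat.choose (2 * d - i - j) (d - i)
      = (2 * d - 1).factorial / ((d - 1).factorial) ^ 2 := by
  obtain ⟨n, rfl⟩ : ∃ n, d = n + 1 := ⟨d - 1, by omega⟩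
  rw [sum_congr rfl fun i hi ↦ Nat.sum_Icc_choose_mul_choose (mem_Icc.mp hi).1 (mem_Icc.mp hi).2,
    sum_const, Nat.card_Icc, smul_eq_mul, show 2 * (n + 1) - 1 = 2 * n + 1 by omega,
    Nat.add_sub_cancel, Nat.add_sub_cancel, Nat.succ_mul_choose_eq_factorial_div]
end
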